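/- arXiv:2407.15201 — 2 statements merged into one kernel-verified Lean document; each statement's English description precedes it below -/
import Mathlib

section
/- For every positive integer n, with p = 2^{⌊log₂ n⌋} and k = ⌊log₂ n⌋, it holds that S_q(n + 2p) = S_q(n) + S_q(2p) + n·q^{k+2}. -/
open scoped BigOperators

/-- distance from `x` to the nearest integer -/
noncomputable def tau (x : ℝ) : ℝ := |x - round x|

/-- q-weighted binary digit sum: `s_q(n) = Σ ω_i q^(i+1)` -/
noncomputable def sdigq (q : ℝ) (n : ℕ) : ℝ :=
  ∑ i ∈ Finset.range n, if n.testBit i then q ^ (i + 1) else 0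

/-- `S_q(n) = Σ_{k<n} s_q(k)` -/
noncomputable def Sdigq (q : ℝ) (n : ℕ) : ℝ := ∑ k ∈ Finset.range n, sdigq q k

/-- Takagi–Landsberg function -/
noncomputable def Ta (a x : ℝ) : ℝ := ∑' n : ℕ, a ^ n * tau (2 ^ n * x)

/-!
Below `2 ^ (k + 1)`, adding `2 ^ (k + 1)` only switches on binary digit `k + 1`, so
`s_q(2 ^ (k + 1) + m) = s_q(m) + q ^ (k + 2)` for every `m < n < 2p = 2 ^ (k + 1)`;
summing over `m < n` gives the identity.
-/

open Finset

lemma sdigq_eq_sum_range_of_lt_two_pow (q : ℝ) {n N : ℕ} (h : n < 2 ^ N) :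
    sdigq q n = ∑ i ∈ range N, if n.testBit i then q ^ (i + 1) else 0 := by
  have extend : ∀ {M M' : ℕ}, M ≤ M' → n < 2 ^ M →
      ∑ i ∈ range M, (if n.testBit i then q ^ (i + 1) else 0) =
        ∑ i ∈ range M', if n.testBit i then q ^ (i + 1) else 0 := by
    intro M M' hMM' hM
    refine sum_subset (range_subset_range.mpr hMM') fun i _ hi => ?_
    have hMi : M ≤ i := not_lt.mp (mem_range.not.mp hi)
    simp [Nat.testBit_lt_two_pow (hM.trans_le (Nat.pow_le_pow_right two_pos hMi))]
  rw [sdigq, extend (le_max_left n N) Nat.lt_two_pow_self, extend (le_max_right n N) h]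

lemma sdigq_two_pow_add (q : ℝ) {J m : ℕ} (h : m < 2 ^ J) :
    sdigq q (2 ^ J + m) = sdigq q m + q ^ (J + 1) := by
  have hsum : 2 ^ J + m < 2 ^ (J + 1) := by rw [pow_succ]; omega
  rw [sdigq_eq_sum_range_of_lt_two_pow q hsum, sdigq_eq_sum_range_of_lt_two_pow q h,
    sum_range_succ, Nat.testBit_two_pow_add_eq, Nat.testBit_lt_two_pow h]
  congr 1
  exact sum_congr rfl fun i hi => by rw [Nat.testBit_two_pow_add_gt (mem_range.mp hi)]

lemma Sdigq_add_two_pow (q : ℝ) {J n : ℕ} (h : n ≤ 2 ^ J) :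
    Sdigq q (n + 2 ^ J) = Sdigq q n + Sdigq q (2 ^ J) + n * q ^ (J + 1) := by
  have shift : ∀ m ∈ range n, sdigq q (2 ^ J + m) = sdigq q m + q ^ (J + 1) :=
    fun m hm => sdigq_two_pow_add q ((mem_range.mp hm).trans_le h)
  rw [Sdigq, Sdigq, Sdigq, add_comm n, sum_range_add, sum_congr rfl shift, sum_add_distrib,
    sum_const, card_range, nsmul_eq_mul]
  ring

theorem Sq_add_two_p_general (q : ℝ) (n : ℕ) :
    Sdigq q (n + 2 * 2 ^ Nat.log 2 n) =
      Sdigq q n + Sdigq q (2 * 2 ^ Nat.log 2 n) + n * q ^ (Nat.log 2 n + 2) := by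
  rw [← pow_succ']
  exact Sdigq_add_two_pow q (Nat.lt_pow_succ_log_self one_lt_two n).le

theorem Sq_add_two_p (q : ℝ) (n : ℕ) (hn : 0 < n) :
    Sdigq q (n + 2 * 2 ^ Nat.log 2 n) =
      Sdigq q n + Sdigq q (2 * 2 ^ Nat.log 2 n) + n * q ^ (Nat.log 2 n + 2) :=
  Sq_add_two_p_general q n
end

section
/- For every positive integer n, with p = 2^{⌊log₂ n⌋} and k = ⌊log₂ n⌋, it holds that S_q(n + p) = S_q(n) + (2q − 1)·S_q(p) − (n − p)·q^{k+1}·(1 − q) + q·p. -/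
open scoped BigOperators

/-! Writing `n = p + m` with `p = 2^k` and `m < p`, the numbers `p + j` (`j < m`) have the digits of `j` plus a leading
digit of weight `q^(k+1)`, so `S_q(p + m) = S_q(p) + S_q(m) + m q^(k+1)`, and likewise with `2p` in place
of `p`. Comparing the two expansions of `S_q(n + p) = S_q(2p + m)` and `S_q(n) = S_q(p + m)` leaves an
identity between `S_q(2p)`, `S_q(p)` and `p`, which is the doubling recursion
`S_q(2p) = 2 S_q(p) + p q^(k+1)` summed up: `2 (1 - q) S_q(2^k) = q 2^k (1 - q^k)`. -/

open Finset

section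

variable (q : ℝ)

lemma sdigq_eq_sum_range {n B : ℕ} (hB : n < 2 ^ B) :
    sdigq q n = ∑ i ∈ range B, if n.testBit i then q ^ (i + 1) else 0 := by
  have extend : ∀ {C N : ℕ}, n < 2 ^ C → C ≤ N →
      ∑ i ∈ range C, (if n.testBit i then q ^ (i + 1) else 0) =
        ∑ i ∈ range N, if n.testBit i then q ^ (i + 1) else 0 := by
    intro C N hC hCN
    refine sum_subset (range_subset_range.2 hCN) fun i _ hi => ?_
    rw [Nat.testBit_lt_two_pow (hC.trans_le (Nat.pow_le_pow_right two_pos (by simpa using hi)))]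
    simp
  rw [sdigq, extend Nat.lt_two_pow_self (Nat.le_add_right n B),
    extend hB (Nat.le_add_left B n)]

lemma sdigq_two_pow_add_s7 {k j : ℕ} (hj : j < 2 ^ k) :
    sdigq q (2 ^ k + j) = sdigq q j + q ^ (k + 1) := by
  rw [sdigq_eq_sum_range q (B := k + 1) (by rw [pow_succ]; omega), sdigq_eq_sum_range q hj,
    sum_range_succ, Nat.testBit_two_pow_add_eq, Nat.testBit_lt_two_pow hj, Bool.not_false, if_pos rfl]
  congr 1
  refine sum_congr rfl fun i hi => ?_
  rw [Nat.testBit_two_pow_add_gt (mem_range.1 hi)]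

lemma Sdigq_two_pow_add {k m : ℕ} (hm : m ≤ 2 ^ k) :
    Sdigq q (2 ^ k + m) = Sdigq q (2 ^ k) + Sdigq q m + m * q ^ (k + 1) := by
  have shift : ∀ j ∈ range m, sdigq q (2 ^ k + j) = sdigq q j + q ^ (k + 1) :=
    fun j hj => sdigq_two_pow_add_s7 q ((mem_range.1 hj).trans_le hm)
  rw [Sdigq, sum_range_add, sum_congr rfl shift, sum_add_distrib, sum_const, card_range,
    nsmul_eq_mul, ← Sdigq, ← Sdigq, add_assoc]

lemma Sdigq_two_pow_succ (k : ℕ) :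
    Sdigq q (2 ^ (k + 1)) = 2 * Sdigq q (2 ^ k) + 2 ^ k * q ^ (k + 1) := by
  rw [pow_succ, mul_two, Sdigq_two_pow_add q le_rfl]
  push_cast
  ring

lemma two_mul_one_sub_mul_Sdigq_two_pow (k : ℕ) :
    2 * (1 - q) * Sdigq q (2 ^ k) = q * 2 ^ k * (1 - q ^ k) := by
  induction k with
  | zero => simp [Sdigq, sdigq]
  | succ k ih =>
    rw [Sdigq_two_pow_succ]
    linear_combination 2 * ih

lemma Sdigq_add_two_pow_s7 {k m : ℕ} (hm : m < 2 ^ k) :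
    Sdigq q (2 ^ k + m + 2 ^ k) =
      Sdigq q (2 ^ k + m) + (2 * q - 1) * Sdigq q (2 ^ k) - m * q ^ (k + 1) * (1 - q) + q * 2 ^ k := by
  have hdouble : 2 ^ k + m + 2 ^ k = 2 ^ (k + 1) + m := by rw [pow_succ]; omega
  rw [hdouble, Sdigq_two_pow_add q (hm.le.trans (Nat.pow_le_pow_right two_pos (Nat.le_add_right k 1))),
    Sdigq_two_pow_add q hm.le, Sdigq_two_pow_succ]
  linear_combination two_mul_one_sub_mul_Sdigq_two_pow q k

end

theorem Sq_add_p (q : ℝ) (n : ℕ) (hn : 0 < n) :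
    Sdigq q (n + 2 ^ Nat.log 2 n) =
      Sdigq q n + (2 * q - 1) * Sdigq q (2 ^ Nat.log 2 n)
        - ((n : ℝ) - 2 ^ Nat.log 2 n) * q ^ (Nat.log 2 n + 1) * (1 - q)
        + q * 2 ^ Nat.log 2 n := by
  have hlow := Nat.pow_log_le_self 2 hn.ne'
  have hhigh := Nat.lt_pow_succ_log_self one_lt_two n
  generalize Nat.log 2 n = k at hlow hhigh ⊢
  obtain ⟨m, rfl⟩ := Nat.exists_eq_add_of_le hlow
  rw [Nat.pow_succ] at hhigh
  push_cast
  linear_combination Sdigq_add_two_pow_s7 q (k := k) (m := m) (by omega)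
end
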